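/- Let G be a graph and m ≥ 0. Then G is integral if and only if its m-duplicate graph Dᵐ(G) is integral. -/

import Mathlib

open Matrix SimpleGraph Finset

variable {V W : Type*}

/-- The adjacency matrix of a simple graph over ℝ is Hermitian. -/
lemma adjMatrix_isHermitian [Fintype V] [DecidableEq V] (G : SimpleGraph V)
    [DecidableRel G.Adj] : (G.adjMatrix ℝ).IsHermitian := by
  rw [Matrix.IsHermitian, Matrix.conjTranspose_eq_transpose_of_trivial]
  exact G.isSymm_adjMatrix

/-- The energy of a finite simple graph: the sum of the absolute values of the
eigenvalues of its real adjacency matrix. -/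
noncomputable def graphEnergy [Fintype V] [DecidableEq V] (G : SimpleGraph V) : ℝ := by
  classical
  exact ∑ i, |(adjMatrix_isHermitian G).eigenvalues i|

/-- The spectrum of a finite simple graph: the multiset of eigenvalues (with
multiplicity) of its real adjacency matrix. -/
noncomputable def graphSpectrum [Fintype V] [DecidableEq V] (G : SimpleGraph V) : Multiset ℝ := by
  classical
  exact Finset.univ.val.map (adjMatrix_isHermitian G).eigenvalues

/-- A graph is integral if every eigenvalue of its adjacency matrix is an integer. -/
def IsIntegralGraph [Fintype V] [DecidableEq V] (G : SimpleGraph V) : Prop :=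
  ∀ x ∈ graphSpectrum G, ∃ k : ℤ, x = (k : ℝ)

/-- The m-shadow graph of `G`, on vertex set `Fin m × V`: `(i,u)` and `(j,v)` are
adjacent iff `u` and `v` are adjacent in `G`. -/
def shadowGraph (m : ℕ) (G : SimpleGraph V) : SimpleGraph (Fin m × V) where
  Adj x y := G.Adj x.2 y.2
  symm := ⟨fun _ _ h => h.symm⟩
  loopless := ⟨fun _ h => G.irrefl h⟩

/-- The duplicate graph of `G`, on vertex set `V ⊕ V`: `inl a` is adjacent to
`inr b` iff `a` and `b` are adjacent in `G`; no other adjacencies. -/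
def duplicateGraph (G : SimpleGraph V) : SimpleGraph (V ⊕ V) where
  Adj x y :=
    match x, y with
    | Sum.inl a, Sum.inr b => G.Adj a b
    | Sum.inr a, Sum.inl b => G.Adj a b
    | _, _ => False
  symm := ⟨by rintro (a | a) (b | b) h <;> first | exact h.symm | exact h.elim⟩
  loopless := ⟨by rintro (a | a) h <;> exact h⟩

/-- The Kronecker (tensor) product of two simple graphs. -/
def tensorGraph (G : SimpleGraph V) (H : SimpleGraph W) : SimpleGraph (V × W) where
  Adj x y := G.Adj x.1 y.1 ∧ H.Adj x.2 y.2
  symm := ⟨fun _ _ h => ⟨h.1.symm, h.2.symm⟩⟩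
  loopless := ⟨fun _ h => G.irrefl h.1⟩

/-- The m-splitting graph of `G`, on vertex set `V ⊕ (Fin m × V)`: original
vertices keep their adjacencies, an original vertex `u` is adjacent to a copy
`(i,v)` iff `u` is adjacent to `v` in `G`, and copies are pairwise non-adjacent. -/
def splittingGraph (m : ℕ) (G : SimpleGraph V) : SimpleGraph (V ⊕ (Fin m × V)) where
  Adj x y :=
    match x, y with
    | Sum.inl u, Sum.inl v => G.Adj u v
    | Sum.inl u, Sum.inr iv => G.Adj u iv.2
    | Sum.inr iu, Sum.inl v => G.Adj iu.2 v
    | Sum.inr _, Sum.inr _ => False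
  symm := ⟨by rintro (u | iu) (v | iv) h <;> first | exact h.symm | exact h.elim⟩
  loopless := ⟨by rintro (u | iu) h <;> first | exact G.irrefl h | exact h⟩

/-- The join of two simple graphs: their disjoint union together with all edges
between the two parts. -/
def joinGraph (G : SimpleGraph V) (H : SimpleGraph W) : SimpleGraph (V ⊕ W) where
  Adj x y :=
    match x, y with
    | Sum.inl a, Sum.inl b => G.Adj a b
    | Sum.inr a, Sum.inr b => H.Adj a b
    | _, _ => True
  symm := ⟨by rintro (a | a) (b | b) h <;> first | exact h.symm | trivial⟩
  loopless := ⟨by rintro (a | a) h <;> first | exact G.irrefl h | exact H.irrefl h⟩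

/-- The superpath graph on a sequence of part sizes: independent sets `W i` of
size `a i`, where vertices in parts `i` and `j` are adjacent iff `|i - j| = 1`. -/
def superpathGraph {t : ℕ} (a : Fin t → ℕ) : SimpleGraph (Σ i : Fin t, Fin (a i)) where
  Adj x y := (x.1 : ℕ) + 1 = (y.1 : ℕ) ∨ (y.1 : ℕ) + 1 = (x.1 : ℕ)
  symm := ⟨fun _ _ h => h.symm⟩
  loopless := ⟨fun x h => by omega⟩

/-- The vertex type of the m-fold duplicate graph. -/
def iterDupVertex (V : Type*) (m : ℕ) : Type _ :=
  Nat.rec V (fun _ T => T ⊕ T) m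

instance instFintypeIterDupVertex {V : Type*} [Fintype V] : ∀ m, Fintype (iterDupVertex V m)
  | 0 => inferInstanceAs (Fintype V)
  | m + 1 =>
    letI := instFintypeIterDupVertex (V := V) m
    inferInstanceAs (Fintype (iterDupVertex V m ⊕ iterDupVertex V m))

instance instDecidableEqIterDupVertex {V : Type*} [DecidableEq V] :
    ∀ m, DecidableEq (iterDupVertex V m)
  | 0 => inferInstanceAs (DecidableEq V)
  | m + 1 =>
    letI := instDecidableEqIterDupVertex (V := V) m
    inferInstanceAs (DecidableEq (iterDupVertex V m ⊕ iterDupVertex V m))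

/-- The m-duplicate graph: `D⁰(G) = G` and `Dᵐ⁺¹(G) = D(Dᵐ(G))`. -/
def iterDup (G : SimpleGraph V) : ∀ m, SimpleGraph (iterDupVertex V m)
  | 0 => G
  | m + 1 => duplicateGraph (iterDup G m)

/-!
The adjacency matrix of `D(G)` is the block matrix `[[0, A], [A, 0]]`, `A` that of `G`. If
`(x, y)` is an eigenvector of it for `μ`, then `x + y` is an eigenvector of `A` for `μ`, unless
`y = -x`, in which case `x` is one for `-μ`; conversely `(x, x)` and `(x, -x)` lift eigenvectors
of `A` for `μ` and `-μ`. So the spectrum of `D(G)` is that of `G` together with its negative,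
and integrality passes along each duplication step.
-/

namespace Matrix

theorem fromBlocks_zero_self_self_zero_mulVec_elim_eq_smul_iff {R n : Type*} [Semiring R]
    [Fintype n] (A : Matrix n n R) (x y : n → R) (μ : R) :
    fromBlocks 0 A A 0 *ᵥ Sum.elim x y = μ • Sum.elim x y ↔
      A *ᵥ y = μ • x ∧ A *ᵥ x = μ • y := by
  rw [← Sum.elim_eq_iff, fromBlocks_mulVec]
  simp only [Sum.elim_comp_inl, Sum.elim_comp_inr, zero_mulVec, zero_add, add_zero]
  constructor <;> intro h <;> (rw [h]; ext (i | i) <;> rfl)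

variable {K n : Type*} [Field K] [Fintype n] [DecidableEq n]

theorem mem_spectrum_iff_exists_mulVec_eq_smul (M : Matrix n n K) (μ : K) :
    μ ∈ spectrum K M ↔ ∃ v ≠ 0, M *ᵥ v = μ • v := by
  simp only [← spectrum_toLin', ← Module.End.hasEigenvalue_iff_mem_spectrum,
    Module.End.hasEigenvalue_iff, Submodule.ne_bot_iff, Module.End.mem_eigenspace_iff,
    toLin'_apply]
  exact exists_congr fun v => and_comm

theorem mem_spectrum_fromBlocks_zero_self_self_zero (A : Matrix n n K) (μ : K) :
    μ ∈ spectrum K (fromBlocks 0 A A 0) ↔ μ ∈ spectrum K A ∨ -μ ∈ spectrum K A := by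
  have elim_ne_zero {x : n → K} (hx : x ≠ 0) (y : n → K) : Sum.elim x y ≠ 0 := fun h =>
    hx (Sum.elim_eq_iff.mp (h.trans Sum.elim_zero_zero.symm)).1
  simp only [mem_spectrum_iff_exists_mulVec_eq_smul]
  constructor
  · rintro ⟨v, hv, hAv⟩
    obtain ⟨x, y, rfl⟩ : ∃ x y, v = Sum.elim x y :=
      ⟨v ∘ Sum.inl, v ∘ Sum.inr, (Sum.elim_comp_inl_inr v).symm⟩
    obtain ⟨hy, hx⟩ := (fromBlocks_zero_self_self_zero_mulVec_elim_eq_smul_iff A x y μ).mp hAv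
    by_cases hxy : x + y = 0
    · obtain rfl : y = -x := eq_neg_of_add_eq_zero_right hxy
      refine Or.inr ⟨x, ?_, by rw [hx, smul_neg, neg_smul]⟩
      rintro rfl
      exact hv (by rw [neg_zero, Sum.elim_zero_zero])
    · exact Or.inl ⟨x + y, hxy, by rw [mulVec_add, hx, hy, smul_add, add_comm]⟩
  · rintro (⟨x, hx, hAx⟩ | ⟨x, hx, hAx⟩)
    · refine ⟨Sum.elim x x, elim_ne_zero hx x, ?_⟩
      exact (fromBlocks_zero_self_self_zero_mulVec_elim_eq_smul_iff A x x μ).mpr ⟨hAx, hAx⟩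
    · refine ⟨Sum.elim x (-x), elim_ne_zero hx (-x), ?_⟩
      refine (fromBlocks_zero_self_self_zero_mulVec_elim_eq_smul_iff A x (-x) μ).mpr ⟨?_, ?_⟩
      · rw [mulVec_neg, hAx, neg_smul, neg_neg]
      · rw [hAx, neg_smul, smul_neg]

end Matrix

theorem adjMatrix_duplicateGraph (G : SimpleGraph V) [DecidableRel G.Adj]
    [DecidableRel (duplicateGraph G).Adj] :
    (duplicateGraph G).adjMatrix ℝ = fromBlocks 0 (G.adjMatrix ℝ) (G.adjMatrix ℝ) 0 := by
  ext (i | i) (j | j) <;>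
    simp only [adjMatrix_apply, fromBlocks_apply₁₁, fromBlocks_apply₁₂, fromBlocks_apply₂₁,
      fromBlocks_apply₂₂, Matrix.zero_apply] <;>
    by_cases h : G.Adj i j <;> simp [duplicateGraph, h]

theorem mem_graphSpectrum_iff [Fintype V] [DecidableEq V] (G : SimpleGraph V)
    [DecidableRel G.Adj] (μ : ℝ) : μ ∈ graphSpectrum G ↔ μ ∈ spectrum ℝ (G.adjMatrix ℝ) := by
  rw [(adjMatrix_isHermitian G).spectrum_real_eq_range_eigenvalues]
  simp only [graphSpectrum, Multiset.mem_map, Finset.mem_val, Finset.mem_univ, true_and,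
    Set.mem_range]
  -- the two sides differ only in the `DecidableRel G.Adj` instance
  congr!

theorem isIntegralGraph_iff_forall_mem_spectrum [Fintype V] [DecidableEq V] (G : SimpleGraph V)
    [DecidableRel G.Adj] :
    IsIntegralGraph G ↔ ∀ μ ∈ spectrum ℝ (G.adjMatrix ℝ), ∃ k : ℤ, μ = k := by
  simp only [IsIntegralGraph, mem_graphSpectrum_iff]

theorem isIntegralGraph_duplicateGraph_iff [Fintype V] [DecidableEq V] (G : SimpleGraph V) :
    IsIntegralGraph (duplicateGraph G) ↔ IsIntegralGraph G := by
  classical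
  simp only [isIntegralGraph_iff_forall_mem_spectrum, adjMatrix_duplicateGraph,
    mem_spectrum_fromBlocks_zero_self_self_zero, or_imp, forall_and]
  refine and_iff_left_of_imp fun h μ hμ => ?_
  obtain ⟨k, hk⟩ := h (-μ) hμ
  exact ⟨-k, by push_cast; linarith⟩

/-- A graph `G` is integral if and only if its m-duplicate graph `Dᵐ(G)` is
integral. -/
theorem isIntegralGraph_iterDup_iff [Fintype V] [DecidableEq V]
    (G : SimpleGraph V) (m : ℕ) :
    IsIntegralGraph G ↔ IsIntegralGraph (iterDup G m) := by
  induction m with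
  | zero => rfl
  | succ m ih => exact ih.trans (isIntegralGraph_duplicateGraph_iff (iterDup G m)).symm
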